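/- Let f : Δ → ℂ be holomorphic on the unit disc Δ with f(Δ) ⊂ closure(Δ), f(0) = 0, f'(0) = λξ₁ and f''(0) = λ²ξ₂ for some λ > 0 and (ξ₁, ξ₂) ∈ ℂ² ∖ {(0,0)}. Then λ ≤ sqrt(2/(|ξ₂| + 2|ξ₁|²)). -/

import Mathlib

/-!
By the Schwarz lemma, `g z = f z / z` again maps the disc into the closed disc, and
`g 0 = f'(0)`, `g'(0) = f''(0) / 2`. The Schwarz–Pick inequality `‖g'(0)‖ ≤ 1 - ‖g 0‖²`, obtained
by composing `g` with the disc automorphism sending `g 0` to `0` and applying the Schwarz lemma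
once more, becomes `‖f''(0)‖ ≤ 2 - 2‖f'(0)‖²`; for `f'(0) = λξ₁`, `f''(0) = λ²ξ₂` this reads
`λ² (‖ξ₂‖ + 2‖ξ₁‖²) ≤ 2`.
-/

open Metric Set ComplexConjugate Topology

theorem AnalyticAt.deriv_dslope {𝕜 : Type*} [NontriviallyNormedField 𝕜] [CompleteSpace 𝕜]
    [CharZero 𝕜] {f : 𝕜 → 𝕜} {x : 𝕜} (hf : AnalyticAt 𝕜 f x) :
    deriv (dslope f x) x = iteratedDeriv 2 f x / 2 := by
  rw [hf.hasFPowerSeriesAt.has_fpower_series_dslope_fslope.deriv]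
  simp [FormalMultilinearSeries.fslope]

namespace Complex

theorem sq_norm_one_sub_conj_mul_sub_sq_norm_sub (a w : ℂ) :
    ‖1 - conj a * w‖ ^ 2 - ‖w - a‖ ^ 2 = (1 - ‖a‖ ^ 2) * (1 - ‖w‖ ^ 2) := by
  simp only [Complex.sq_norm, normSq_apply, sub_re, sub_im, mul_re, mul_im, one_re, one_im,
    conj_re, conj_im]
  ring

theorem one_sub_conj_mul_ne_zero {a w : ℂ} (ha : ‖a‖ < 1) (hw : ‖w‖ ≤ 1) :
    1 - conj a * w ≠ 0 := by
  refine sub_ne_zero.2 fun h => ?_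
  have : ‖conj a * w‖ < 1 := by
    rw [norm_mul, norm_conj]
    nlinarith [norm_nonneg a, norm_nonneg w]
  simp [← h] at this

theorem norm_sub_div_one_sub_conj_mul_le_one {a w : ℂ} (ha : ‖a‖ < 1) (hw : ‖w‖ ≤ 1) :
    ‖(w - a) / (1 - conj a * w)‖ ≤ 1 := by
  rw [norm_div, div_le_one (norm_pos_iff.2 (one_sub_conj_mul_ne_zero ha hw))]
  refine pow_le_pow_iff_left₀ (norm_nonneg _) (norm_nonneg _) two_ne_zero |>.1 ?_
  have ha' : 0 ≤ 1 - ‖a‖ ^ 2 := by nlinarith [norm_nonneg a]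
  have hw' : 0 ≤ 1 - ‖w‖ ^ 2 := by nlinarith [norm_nonneg w]
  nlinarith [sq_norm_one_sub_conj_mul_sub_sq_norm_sub a w, mul_nonneg ha' hw']

theorem hasDerivAt_sub_div_one_sub_conj_mul {a : ℂ} (ha : ‖a‖ < 1) :
    HasDerivAt (fun w => (w - a) / (1 - conj a * w)) (1 / (1 - ‖a‖ ^ 2 : ℝ)) a := by
  have hden : 1 - conj a * a ≠ 0 := one_sub_conj_mul_ne_zero ha ha.le
  refine (((hasDerivAt_id a).sub_const a).div
    (((hasDerivAt_id a).const_mul (conj a)).const_sub 1) hden).congr_deriv ?_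
  have hconj : conj a * a = (‖a‖ ^ 2 : ℝ) := by rw [mul_comm, mul_conj, normSq_eq_norm_sq]
  simp only [id, sub_self, zero_mul, sub_zero, mul_one, one_mul, hconj] at hden ⊢
  push_cast at hden ⊢
  field_simp

theorem deriv_eq_zero_of_norm_eq_one_of_mapsTo_closedBall {g : ℂ → ℂ}
    (hd : DifferentiableOn ℂ g (ball 0 1)) (hmaps : MapsTo g (ball 0 1) (closedBall 0 1))
    (hg0 : ‖g 0‖ = 1) : deriv g 0 = 0 := by
  have hmem : ball (0 : ℂ) 1 ∈ 𝓝 0 := ball_mem_nhds 0 one_pos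
  have hmax : IsLocalMax (norm ∘ g) 0 :=
    Filter.mem_of_superset hmem fun z hz => by simpa [hg0] using hmaps hz
  have hconst : g =ᶠ[𝓝 0] fun _ => g 0 := eventually_eq_of_isLocalMax_norm
    (Filter.mem_of_superset hmem fun z hz => hd.differentiableAt (isOpen_ball.mem_nhds hz)) hmax
  exact hconst.deriv_eq.trans (deriv_const 0 (g 0))

/-- **Schwarz–Pick lemma** at the origin. -/
theorem norm_deriv_le_one_sub_sq_norm {g : ℂ → ℂ} (hd : DifferentiableOn ℂ g (ball 0 1))
    (hmaps : MapsTo g (ball 0 1) (closedBall 0 1)) : ‖deriv g 0‖ ≤ 1 - ‖g 0‖ ^ 2 := by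
  have h0 : (0 : ℂ) ∈ ball (0 : ℂ) 1 := mem_ball_self one_pos
  rcases (mem_closedBall_zero_iff.1 (hmaps h0)).lt_or_eq with ha | ha
  swap
  · simp [deriv_eq_zero_of_norm_eq_one_of_mapsTo_closedBall hd hmaps ha, ha]
  set a := g 0 with ha_def
  set φ : ℂ → ℂ := fun w => (w - a) / (1 - conj a * w)
  have hφg_maps : MapsTo (φ ∘ g) (ball 0 1) (closedBall ((φ ∘ g) 0) 1) := by
    intro z hz
    simpa [φ, ← ha_def] using norm_sub_div_one_sub_conj_mul_le_one ha
      (mem_closedBall_zero_iff.1 (hmaps hz))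
  have hφg_diff : DifferentiableOn ℂ (φ ∘ g) (ball 0 1) := by
    refine (hd.sub_const a).div ((hd.const_mul _).const_sub 1) fun z hz => ?_
    exact one_sub_conj_mul_ne_zero ha (mem_closedBall_zero_iff.1 (hmaps hz))
  have hderiv : deriv (φ ∘ g) 0 = 1 / (1 - ‖a‖ ^ 2 : ℝ) * deriv g 0 :=
    ((hasDerivAt_sub_div_one_sub_conj_mul ha).comp 0
      (hd.differentiableAt (isOpen_ball.mem_nhds h0)).hasDerivAt).deriv
  have hpos : 0 < 1 - ‖a‖ ^ 2 := by nlinarith [norm_nonneg a]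
  have := norm_deriv_le_one_of_mapsTo_ball hφg_diff hφg_maps one_pos
  rwa [hderiv, norm_mul, norm_div, norm_one, norm_real, Real.norm_of_nonneg hpos.le,
    one_div_mul_eq_div, div_le_one hpos] at this

/-- Second order **Schwarz inequality**. -/
theorem norm_iteratedDeriv_two_le {f : ℂ → ℂ} (hd : DifferentiableOn ℂ f (ball 0 1))
    (hmaps : MapsTo f (ball 0 1) (closedBall 0 1)) (h0 : f 0 = 0) :
    ‖iteratedDeriv 2 f 0‖ ≤ 2 - 2 * ‖deriv f 0‖ ^ 2 := by
  have hnhds : ball (0 : ℂ) 1 ∈ 𝓝 0 := ball_mem_nhds 0 one_pos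
  have hslope_maps : MapsTo (dslope f 0) (ball 0 1) (closedBall 0 1) := fun z hz => by
    simpa using norm_dslope_le_div_of_mapsTo_ball hd (by rwa [h0]) hz
  have := norm_deriv_le_one_sub_sq_norm ((differentiableOn_dslope hnhds).2 hd) hslope_maps
  rw [(hd.analyticAt hnhds).deriv_dslope, dslope_same, norm_div, RCLike.norm_two] at this
  linarith

end Complex

theorem kobayashi_two_metric_disc_upper_general (f : ℂ → ℂ) (ξ₁ ξ₂ : ℂ) (lam : ℝ)
    (hf : DifferentiableOn ℂ f (ball (0 : ℂ) 1))
    (hmap : MapsTo f (ball (0 : ℂ) 1) (closedBall (0 : ℂ) 1))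
    (h0 : f 0 = 0)
    (hξ : (ξ₁, ξ₂) ≠ (0, 0))
    (hd1 : deriv f 0 = (lam : ℂ) * ξ₁)
    (hd2 : iteratedDeriv 2 f 0 = (lam : ℂ) ^ 2 * ξ₂) :
    lam ≤ Real.sqrt (2 / (‖ξ₂‖ + 2 * ‖ξ₁‖ ^ 2)) := by
  have hschwarz := Complex.norm_iteratedDeriv_two_le hf hmap h0
  simp only [hd1, hd2, norm_mul, norm_pow, Complex.norm_real, Real.norm_eq_abs, mul_pow,
    sq_abs] at hschwarz
  have hpos : 0 < ‖ξ₂‖ + 2 * ‖ξ₁‖ ^ 2 := by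
    rcases eq_or_ne ξ₁ 0 with rfl | h₁
    · have : ξ₂ ≠ 0 := by simpa using hξ
      simpa using this
    · positivity
  refine (le_abs_self lam).trans (Real.abs_le_sqrt ?_)
  rw [le_div_iff₀ hpos]
  linarith

/-- Upper bound half of `K²_Δ(0,ξ) = √(|ξ₁|² + |ξ₂|/2)`: if `f : Δ → closure Δ` is
holomorphic with `f 0 = 0`, `f'(0) = λξ₁`, `f''(0) = λ²ξ₂`, `λ > 0`, `ξ ≠ 0`, then
`λ ≤ √(2/(|ξ₂| + 2|ξ₁|²))`. -/
theorem kobayashi_two_metric_disc_upper (f : ℂ → ℂ) (ξ₁ ξ₂ : ℂ) (lam : ℝ)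
    (hf : DifferentiableOn ℂ f (ball (0 : ℂ) 1))
    (hmap : MapsTo f (ball (0 : ℂ) 1) (closedBall (0 : ℂ) 1))
    (h0 : f 0 = 0)
    (hlam : 0 < lam)
    (hξ : (ξ₁, ξ₂) ≠ (0, 0))
    (hd1 : deriv f 0 = (lam : ℂ) * ξ₁)
    (hd2 : iteratedDeriv 2 f 0 = (lam : ℂ) ^ 2 * ξ₂) :
    lam ≤ Real.sqrt (2 / (‖ξ₂‖ + 2 * ‖ξ₁‖ ^ 2)) :=
  kobayashi_two_metric_disc_upper_general f ξ₁ ξ₂ lam hf hmap h0 hξ hd1 hd2
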